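/- (The relaxed worst-case regret dominates the worst-case regret.) Let n ≥ 1, let x be a schedule, and define LB(r) = max{ LB₁(r), LB₂(r), LB₃(r) } as the combined lower bound on the optimal makespan. Then the relaxed worst-case regret Z̃(x) = max over jobs j of ( C_max(x, r̄^j) − LB(r̄^j) ) satisfies Z̃(x) ≥ Z(x). -/

import Mathlib

/-!
Fix a scenario `r` and a machine on which `x` attains its makespan. Its critical job `j` is the
last one that starts at its release date; every job after `j` runs without idle time. In the
extreme scenario `r̄^j` the job `j` is released `δ = r⁺ j - r j` later, so `C_max(x, ·)` grows by
at least `δ`. On the other hand `r̄^j ≤ r + δ` pointwise, and completion times are monotone and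
`1`-Lipschitz in the release dates, so `C*` grows by at most `δ`. Hence
`Q(x, r) ≤ C_max(x, r̄^j) - C*(r̄^j) ≤ C_max(x, r̄^j) - LB(r̄^j)`, since each of `LB₁, LB₂, LB₃`
bounds the makespan of every schedule from below: for `LB₂` and `LB₃` by pigeonhole, some machine
carries at least the average share of the jobs of `E_j(r)`, and none of them starts before
`min_{t ∈ E_j(r)} r t`.
-/

open Finset

/-- A schedule assigns to each machine a finite sequence of jobs such that
every job occurs exactly once among all the sequences. -/
structure Schedule (m n : ℕ) where
  seq : Fin m → List (Fin n)
  valid : ∀ j : Fin n, (∑ i : Fin m, (seq i).count j) = 1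

variable {m n : ℕ}

/-- Completion time after processing the list `L` of jobs on a machine with
processing times `q` and release dates `r`; recursively `C₀ = 0`,
`C_k = q j_k + max C_{k-1} (r j_k)`. -/
def mComp (q r : Fin n → ℝ) (L : List (Fin n)) : ℝ :=
  L.foldl (fun c j => q j + max c (r j)) 0

/-- Makespan of the schedule `x` under the release dates `r`. -/
noncomputable def Cmax (p : Fin m → Fin n → ℝ) (x : Schedule m n) (r : Fin n → ℝ) : ℝ :=
  ⨆ i : Fin m, mComp (p i) r (x.seq i)

/-- Optimal makespan `C*(r)`: the minimum of `Cmax` over all schedules. -/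
noncomputable def Cstar (p : Fin m → Fin n → ℝ) (r : Fin n → ℝ) : ℝ :=
  ⨅ x : Schedule m n, Cmax p x r

/-- Regret of schedule `x` under scenario `r`. -/
noncomputable def regret (p : Fin m → Fin n → ℝ) (x : Schedule m n) (r : Fin n → ℝ) : ℝ :=
  Cmax p x r - Cstar p r

/-- The scenario box determined by the interval bounds. -/
def box (rlo rhi : Fin n → ℝ) : Set (Fin n → ℝ) :=
  {r | ∀ j, rlo j ≤ r j ∧ r j ≤ rhi j}

/-- Worst-case regret `Z(x)`. -/
noncomputable def Zreg (p : Fin m → Fin n → ℝ) (x : Schedule m n) (rlo rhi : Fin n → ℝ) : ℝ :=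
  sSup ((fun r => regret p x r) '' box rlo rhi)

/-- Extreme scenario `r̄^j`. -/
def extSc (rlo rhi : Fin n → ℝ) (j : Fin n) : Fin n → ℝ :=
  Function.update rlo j (rhi j)

/-- The set `H(x)` of jobs whose release interval is covered by the
processing of their predecessors (positions are 0-indexed: job at position
`k ≥ 1` has predecessors `(x.seq i).take k`). -/
def Hset (p : Fin m → Fin n → ℝ) (rlo rhi : Fin n → ℝ) (x : Schedule m n) : Set (Fin n) :=
  {j | ∃ i : Fin m, ∃ k : ℕ, 1 ≤ k ∧ (x.seq i)[k]? = some j ∧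
    rhi j ≤ mComp (p i) rlo ((x.seq i).take k)}

/-- Lower bound `LB₁(r) = max_j (r j + min_i p i j)`. -/
noncomputable def LB1 (p : Fin m → Fin n → ℝ) (r : Fin n → ℝ) : ℝ :=
  ⨆ j : Fin n, (r j + ⨅ i : Fin m, p i j)

/-- Lower bound `LB(r) = min_j r j + m⁻¹ ∑_j min_i p i j`. -/
noncomputable def LB0 (p : Fin m → Fin n → ℝ) (r : Fin n → ℝ) : ℝ :=
  (⨅ j : Fin n, r j) + (m : ℝ)⁻¹ * ∑ j : Fin n, ⨅ i : Fin m, p i j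

/-- `E_j(r)`: the jobs unavailable before `j`. -/
noncomputable def Ej (r : Fin n → ℝ) (j : Fin n) : Finset (Fin n) :=
  Finset.univ.filter fun t => r j ≤ r t

lemma Ej_nonempty (r : Fin n → ℝ) (j : Fin n) : (Ej r j).Nonempty :=
  ⟨j, by simp [Ej]⟩

/-- `W_j(E_j(r), p)` from the paper. -/
noncomputable def W2 (p : Fin m → Fin n → ℝ) (r : Fin n → ℝ) (j : Fin n) : ℝ :=
  (Ej r j).inf' (Ej_nonempty r j) r + (m : ℝ)⁻¹ * ∑ t ∈ Ej r j, ⨅ i : Fin m, p i t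

/-- Lower bound `LB₂(r)`. -/
noncomputable def LB2 (p : Fin m → Fin n → ℝ) (r : Fin n → ℝ) : ℝ :=
  ⨆ j : Fin n, W2 p r j

/-- `W̃_j(E_j(r), p_w)` from the paper, with `λ_j = ⌈|E_j(r)|/m⌉`. -/
noncomputable def W3 (p : Fin m → Fin n → ℝ) (r : Fin n → ℝ) (j : Fin n) : ℝ :=
  (Ej r j).inf' (Ej_nonempty r j) r +
    (⌈((Ej r j).card : ℝ) / (m : ℝ)⌉ : ℝ) *
      (Ej r j).inf' (Ej_nonempty r j) (fun t => ⨅ i : Fin m, p i t)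

/-- Lower bound `LB₃(r)`. -/
noncomputable def LB3 (p : Fin m → Fin n → ℝ) (r : Fin n → ℝ) : ℝ :=
  ⨆ j : Fin n, W3 p r j

/-- The combined lower bound `LB(r̄) = max {LB₁, LB₂, LB₃}`. -/
noncomputable def LBall (p : Fin m → Fin n → ℝ) (r : Fin n → ℝ) : ℝ :=
  max (LB1 p r) (max (LB2 p r) (LB3 p r))

lemma List.sum_map_eq_sum_count {α M : Type*} [Fintype α] [DecidableEq α] [AddCommMonoid M]
    (L : List α) (f : α → M) : (L.map f).sum = ∑ t, L.count t • f t := by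
  rw [Finset.sum_list_map_count]
  exact Finset.sum_subset (Finset.subset_univ _) fun t _ ht => by
    rw [List.count_eq_zero.2 (by simpa using ht), zero_smul]

lemma List.sum_map_ite_one_eq_countP {α : Type*} [DecidableEq α] (s : Finset α) (L : List α) :
    (L.map fun t => if t ∈ s then (1 : ℝ) else 0).sum = (L.countP (· ∈ s) : ℝ) := by
  simp [List.sum_map_ite, List.countP_eq_length_filter]

section SingleMachine

variable {q q' r r' : Fin n → ℝ}

def mCompFrom (q r : Fin n → ℝ) (c : ℝ) (L : List (Fin n)) : ℝ :=
  L.foldl (fun c j => q j + max c (r j)) c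

lemma mComp_eq_mCompFrom (L : List (Fin n)) : mComp q r L = mCompFrom q r 0 L := rfl

@[simp]
lemma mCompFrom_nil (c : ℝ) : mCompFrom q r c [] = c := rfl

@[simp]
lemma mCompFrom_cons (c : ℝ) (j : Fin n) (L : List (Fin n)) :
    mCompFrom q r c (j :: L) = mCompFrom q r (q j + max c (r j)) L := rfl

lemma mCompFrom_append (c : ℝ) (A B : List (Fin n)) :
    mCompFrom q r c (A ++ B) = mCompFrom q r (mCompFrom q r c A) B :=
  List.foldl_append

lemma add_sum_le_mCompFrom (hq : ∀ t, q' t ≤ q t) (L : List (Fin n)) (c : ℝ) :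
    c + (L.map q').sum ≤ mCompFrom q r c L := by
  induction L generalizing c with
  | nil => simp
  | cons j L ih =>
    simp only [List.map_cons, List.sum_cons, mCompFrom_cons]
    linarith [ih (q j + max c (r j)), hq j, le_max_left c (r j)]

lemma mComp_nonneg (hq : ∀ t, 0 ≤ q t) (L : List (Fin n)) : 0 ≤ mComp q r L := by
  simpa [mComp_eq_mCompFrom] using add_sum_le_mCompFrom (q' := fun _ => 0) (r := r) hq L 0

lemma le_mComp_append_cons (hq : ∀ t, q' t ≤ q t) (A B : List (Fin n)) (j : Fin n) :
    r j + q j + (B.map q').sum ≤ mComp q r (A ++ j :: B) := by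
  rw [mComp_eq_mCompFrom, mCompFrom_append, mCompFrom_cons]
  linarith [add_sum_le_mCompFrom (r := r) hq B (q j + max (mCompFrom q r 0 A) (r j)),
    le_max_right (mCompFrom q r 0 A) (r j)]

/-- The first job `t` of `L` with `q' t ≠ 0` starts no earlier than `a`, and from then on the
machine is busy for at least the remaining `q'`-processing time. -/
lemma add_sum_le_mCompFrom_of_sum_ne_zero {a : ℝ} (hq : ∀ t, q' t ≤ q t)
    (ha : ∀ t, q' t ≠ 0 → a ≤ r t) (L : List (Fin n)) (hL : (L.map q').sum ≠ 0) (c : ℝ) :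
    a + (L.map q').sum ≤ mCompFrom q r c L := by
  induction L generalizing c with
  | nil => simp at hL
  | cons j L ih =>
    simp only [List.map_cons, List.sum_cons, mCompFrom_cons] at hL ⊢
    by_cases hj : q' j = 0
    · rw [hj, zero_add] at hL ⊢
      exact ih hL _
    · linarith [add_sum_le_mCompFrom (r := r) hq L (q j + max c (r j)), hq j,
        (ha j hj).trans (le_max_right c (r j))]

lemma exists_critical_job_mComp (hr : ∀ t, 0 ≤ r t) (L : List (Fin n)) (hL : L ≠ []) :
    ∃ A j B, L = A ++ j :: B ∧ mComp q r L ≤ r j + q j + (B.map q).sum := by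
  induction L using List.reverseRecOn with
  | nil => exact absurd rfl hL
  | append_singleton L a ih =>
    have hstep : mComp q r (L ++ [a]) = q a + max (mComp q r L) (r a) := by
      simp [mComp_eq_mCompFrom, mCompFrom_append]
    rcases le_or_gt (mComp q r L) (r a) with hidle | hbusy
    · exact ⟨L, a, [], rfl, by simp [hstep, max_eq_right hidle, add_comm]⟩
    · have hne : L ≠ [] := by
        rintro rfl
        exact (hr a).not_gt hbusy
      obtain ⟨A, j, B, rfl, hcrit⟩ := ih hne
      refine ⟨A, j, B ++ [a], by simp, ?_⟩
      simp only [hstep, max_eq_left hbusy.le, List.map_append, List.sum_append, List.map_cons,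
        List.sum_cons, List.map_nil, List.sum_nil]
      linarith

lemma mCompFrom_le_add {c c' δ : ℝ} (hr : ∀ t, r' t ≤ r t + δ) (hc : c' ≤ c + δ)
    (L : List (Fin n)) : mCompFrom q r' c' L ≤ mCompFrom q r c L + δ := by
  induction L generalizing c c' with
  | nil => simpa using hc
  | cons j L ih =>
    refine ih ?_
    have := max_le_max hc (hr j)
    rw [max_add_add_right] at this
    linarith

lemma mComp_le_add {δ : ℝ} (hδ : 0 ≤ δ) (hr : ∀ t, r' t ≤ r t + δ) (L : List (Fin n)) :
    mComp q r' L ≤ mComp q r L + δ :=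
  mCompFrom_le_add hr (by simpa using hδ) L

end SingleMachine

namespace Schedule

lemma exists_mem_seq (x : Schedule m n) (j : Fin n) : ∃ i A B, x.seq i = A ++ j :: B := by
  obtain ⟨i, -, hi⟩ : ∃ i ∈ univ, (x.seq i).count j ≠ 0 :=
    Finset.exists_ne_zero_of_sum_ne_zero (by rw [x.valid j]; exact one_ne_zero)
  obtain ⟨A, B, hAB⟩ := List.append_of_mem (List.count_pos_iff.1 (Nat.pos_of_ne_zero hi))
  exact ⟨i, A, B, hAB⟩

lemma sum_sum_map_seq {M : Type*} [AddCommMonoid M] (x : Schedule m n) (w : Fin n → M) :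
    ∑ i, ((x.seq i).map w).sum = ∑ t, w t := by
  simp_rw [List.sum_map_eq_sum_count]
  rw [Finset.sum_comm]
  simp_rw [← Finset.sum_smul, x.valid, one_smul]

lemma exists_div_le_sum_map_seq [NeZero m] (x : Schedule m n) (w : Fin n → ℝ) :
    ∃ i, (∑ t, w t) / m ≤ ((x.seq i).map w).sum := by
  obtain ⟨i, -, hi⟩ := Finset.exists_le_of_sum_le (f := fun _ => (∑ t, w t) / m)
    (g := fun i => ((x.seq i).map w).sum) univ_nonempty (by
      rw [x.sum_sum_map_seq, sum_const, card_univ, Fintype.card_fin, nsmul_eq_mul,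
        mul_div_cancel₀ _ (Nat.cast_ne_zero.2 (NeZero.ne m))])
  exact ⟨i, hi⟩

end Schedule

section Makespan

variable {p : Fin m → Fin n → ℝ} {r r' : Fin n → ℝ}

lemma mComp_le_Cmax (x : Schedule m n) (i : Fin m) : mComp (p i) r (x.seq i) ≤ Cmax p x r :=
  le_ciSup (f := fun i => mComp (p i) r (x.seq i)) (Finite.bddAbove_range _) i

lemma exists_mComp_eq_Cmax [NeZero m] (x : Schedule m n) :
    ∃ i, mComp (p i) r (x.seq i) = Cmax p x r :=
  exists_eq_ciSup_of_finite

lemma Cmax_nonneg (hp : ∀ i j, 0 ≤ p i j) (x : Schedule m n) : 0 ≤ Cmax p x r :=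
  Real.iSup_nonneg fun i => mComp_nonneg (hp i) _

lemma exists_add_le_Cmax (hp : ∀ i j, 0 ≤ p i j) (x : Schedule m n) (j : Fin n) :
    ∃ i, r j + p i j ≤ Cmax p x r := by
  obtain ⟨i, A, B, hseq⟩ := x.exists_mem_seq j
  have := le_mComp_append_cons (q' := fun _ => 0) (r := r) (hp i) A B j
  rw [← hseq, List.map_const', List.sum_replicate, smul_zero, add_zero] at this
  exact ⟨i, this.trans (mComp_le_Cmax x i)⟩

lemma Cmax_le_add [NeZero m] {δ : ℝ} (hδ : 0 ≤ δ) (hr : ∀ t, r' t ≤ r t + δ)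
    (x : Schedule m n) : Cmax p x r' ≤ Cmax p x r + δ :=
  ciSup_le fun i => (mComp_le_add hδ hr _).trans (add_le_add_left (mComp_le_Cmax x i) δ)

lemma Cstar_le_Cmax (hp : ∀ i j, 0 ≤ p i j) (x : Schedule m n) : Cstar p r ≤ Cmax p x r :=
  ciInf_le ⟨0, by rintro _ ⟨y, rfl⟩; exact Cmax_nonneg hp y⟩ x

lemma le_Cstar [Nonempty (Schedule m n)] {c : ℝ} (h : ∀ y : Schedule m n, c ≤ Cmax p y r) :
    c ≤ Cstar p r :=
  le_ciInf h

lemma Cstar_le_add [NeZero m] [Nonempty (Schedule m n)] (hp : ∀ i j, 0 ≤ p i j) {δ : ℝ}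
    (hδ : 0 ≤ δ) (hr : ∀ t, r' t ≤ r t + δ) : Cstar p r' ≤ Cstar p r + δ := by
  have : Cstar p r' - δ ≤ Cstar p r := le_Cstar fun y => by
    linarith [Cstar_le_Cmax (r := r') hp y, Cmax_le_add (p := p) hδ hr y]
  linarith

lemma exists_critical_job [NeZero m] [NeZero n] (hp : ∀ i j, 0 < p i j) (hr : ∀ t, 0 ≤ r t)
    (x : Schedule m n) :
    ∃ i A j B, x.seq i = A ++ j :: B ∧ Cmax p x r ≤ r j + p i j + (B.map (p i)).sum := by
  obtain ⟨i, hi⟩ := exists_mComp_eq_Cmax (p := p) (r := r) x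
  have hne : x.seq i ≠ [] := by
    intro hnil
    obtain ⟨i', hi'⟩ := exists_add_le_Cmax (fun i j => (hp i j).le) x 0
    have hzero : Cmax p x r = 0 := by rw [← hi, hnil]; rfl
    linarith [hr 0, hp i' 0]
  obtain ⟨A, j, B, hseq, hcrit⟩ := exists_critical_job_mComp (q := p i) hr _ hne
  exact ⟨i, A, j, B, hseq, hi ▸ hcrit⟩

end Makespan

section LowerBounds

variable {p : Fin m → Fin n → ℝ} {r : Fin n → ℝ}

lemma iInf_le_apply (t : Fin n) (i : Fin m) : (⨅ i, p i t) ≤ p i t :=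
  ciInf_le (Finite.bddBelow_range _) i

lemma iInf_apply_pos [NeZero m] (hp : ∀ i j, 0 < p i j) (t : Fin n) : 0 < ⨅ i, p i t := by
  obtain ⟨i, hi⟩ := exists_eq_ciInf_of_finite (f := fun i => p i t)
  exact hi ▸ hp i t

lemma LB1_le_Cmax [NeZero n] (hp : ∀ i j, 0 ≤ p i j) (y : Schedule m n) :
    LB1 p r ≤ Cmax p y r :=
  ciSup_le fun t => by
    obtain ⟨i, hi⟩ := exists_add_le_Cmax hp y t
    linarith [iInf_le_apply (p := p) t i]

lemma inf'_add_sum_le_Cmax {E : Finset (Fin n)} (hE : E.Nonempty) {w : Fin n → ℝ}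
    (hwp : ∀ i t, w t ≤ p i t) (hwE : ∀ t ∉ E, w t = 0) (y : Schedule m n) (i : Fin m)
    (hi : ((y.seq i).map w).sum ≠ 0) : E.inf' hE r + ((y.seq i).map w).sum ≤ Cmax p y r :=
  (add_sum_le_mCompFrom_of_sum_ne_zero (hwp i)
    (fun t ht => E.inf'_le r (not_not.1 (mt (hwE t) ht))) _ hi 0).trans (mComp_le_Cmax y i)

lemma W2_le_Cmax [NeZero m] (hp : ∀ i j, 0 < p i j) (j : Fin n) (y : Schedule m n) :
    W2 p r j ≤ Cmax p y r := by
  set E := Ej r j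
  set w : Fin n → ℝ := fun t => if t ∈ E then ⨅ i, p i t else 0
  have hsum : ∑ t, w t = ∑ t ∈ E, ⨅ i, p i t := by simp [w, Finset.sum_ite_mem]
  have hpos : 0 < (∑ t ∈ E, ⨅ i, p i t) / m := div_pos
    (sum_pos (fun t _ => iInf_apply_pos hp t) (Ej_nonempty r j)) (Nat.cast_pos.2 (NeZero.pos m))
  obtain ⟨i, hi⟩ := y.exists_div_le_sum_map_seq w
  rw [hsum] at hi
  have := inf'_add_sum_le_Cmax (r := r) (Ej_nonempty r j) (w := w)
    (fun i t => by dsimp only [w]; split_ifs; exacts [iInf_le_apply t i, (hp i t).le])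
    (fun t ht => if_neg ht) y i (hpos.trans_le hi).ne'
  rw [W2, inv_mul_eq_div]
  linarith

lemma W3_le_Cmax [NeZero m] (hp : ∀ i j, 0 < p i j) (j : Fin n) (y : Schedule m n) :
    W3 p r j ≤ Cmax p y r := by
  set E := Ej r j
  set c := E.inf' (Ej_nonempty r j) fun t => ⨅ i, p i t
  set w : Fin n → ℝ := fun t => if t ∈ E then 1 else 0
  have hc : 0 < c := (lt_inf'_iff _).2 fun t _ => iInf_apply_pos hp t
  obtain ⟨i, hi⟩ := y.exists_div_le_sum_map_seq w
  rw [show ∑ t, w t = E.card by simp [w]] at hi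
  rw [List.sum_map_ite_one_eq_countP] at hi
  set N := (y.seq i).countP (· ∈ E)
  have hceil : (⌈(E.card : ℝ) / m⌉ : ℝ) ≤ N := by
    exact_mod_cast Int.ceil_le.2 (by exact_mod_cast hi)
  have hN : 0 < (N : ℝ) := (div_pos (Nat.cast_pos.2 (card_pos.2 (Ej_nonempty r j)))
    (Nat.cast_pos.2 (NeZero.pos m))).trans_le hi
  have hcw : ((y.seq i).map fun t => c * w t).sum = c * N := by
    rw [List.sum_map_mul_left, List.sum_map_ite_one_eq_countP]
  have := inf'_add_sum_le_Cmax (r := r) (Ej_nonempty r j) (w := fun t => c * w t)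
    (fun i t => by
      dsimp only [w]
      split_ifs with ht
      · exact (mul_one c).trans_le ((E.inf'_le _ ht).trans (iInf_le_apply t i))
      · exact (mul_zero c).trans_le (hp i t).le)
    (fun t ht => by dsimp only [w]; rw [if_neg ht, mul_zero]) y i (by rw [hcw]; positivity)
  rw [hcw] at this
  calc W3 p r j = E.inf' (Ej_nonempty r j) r + (⌈(E.card : ℝ) / m⌉ : ℝ) * c := rfl
    _ ≤ E.inf' (Ej_nonempty r j) r + c * N := by nlinarith
    _ ≤ Cmax p y r := this

lemma LBall_le_Cmax [NeZero m] [NeZero n] (hp : ∀ i j, 0 < p i j) (y : Schedule m n) :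
    LBall p r ≤ Cmax p y r :=
  max_le (LB1_le_Cmax (fun i j => (hp i j).le) y)
    (max_le (ciSup_le fun j => W2_le_Cmax hp j y) (ciSup_le fun j => W3_le_Cmax hp j y))

lemma LBall_le_Cstar [NeZero m] [NeZero n] [Nonempty (Schedule m n)] (hp : ∀ i j, 0 < p i j) :
    LBall p r ≤ Cstar p r :=
  le_Cstar fun y => LBall_le_Cmax hp y

end LowerBounds

section Regret

variable {rlo rhi r : Fin n → ℝ}

lemma extSc_self (j : Fin n) : extSc rlo rhi j j = rhi j :=
  Function.update_self ..

lemma extSc_le_add (hr : r ∈ box rlo rhi) (j t : Fin n) :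
    extSc rlo rhi j t ≤ r t + (rhi j - r j) := by
  rcases eq_or_ne t j with rfl | htj
  · rw [extSc_self]; linarith
  · rw [extSc, Function.update_of_ne htj]; linarith [(hr t).1, (hr j).2]

lemma exists_regret_le_extSc [NeZero m] [NeZero n] {p : Fin m → Fin n → ℝ}
    (hp : ∀ i j, 0 < p i j) (hlo : ∀ j, 0 ≤ rlo j) (hr : r ∈ box rlo rhi) (x : Schedule m n) :
    ∃ j, regret p x r ≤ Cmax p x (extSc rlo rhi j) - Cstar p (extSc rlo rhi j) := by
  have : Nonempty (Schedule m n) := ⟨x⟩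
  obtain ⟨i, A, j, B, hseq, hcrit⟩ := exists_critical_job hp (fun t => (hlo t).trans (hr t).1) x
  refine ⟨j, ?_⟩
  have hdelay : Cmax p x r + (rhi j - r j) ≤ Cmax p x (extSc rlo rhi j) := by
    have := le_mComp_append_cons (r := extSc rlo rhi j) (fun t => le_refl (p i t)) A B j
    rw [← hseq, extSc_self] at this
    linarith [mComp_le_Cmax (p := p) (r := extSc rlo rhi j) x i]
  have hopt : Cstar p (extSc rlo rhi j) ≤ Cstar p r + (rhi j - r j) :=
    Cstar_le_add (fun i j => (hp i j).le) (sub_nonneg.2 (hr j).2) (extSc_le_add hr j)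
  rw [regret]
  linarith

end Regret

theorem relaxed_regret_dominates_general {m n : ℕ} (hm : 0 < m) (hn : 1 ≤ n)
    (p : Fin m → Fin n → ℝ) (hp : ∀ i j, 0 < p i j)
    (rlo rhi : Fin n → ℝ) (hlo : ∀ j, 0 ≤ rlo j)
    (x : Schedule m n) :
    Zreg p x rlo rhi ≤
      ⨆ j : Fin n, (Cmax p x (extSc rlo rhi j) - LBall p (extSc rlo rhi j)) := by
  have : NeZero m := ⟨hm.ne'⟩
  have : NeZero n := ⟨by omega⟩
  have : Nonempty (Schedule m n) := ⟨x⟩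
  have hbdd := Finite.bddAbove_range fun j =>
    Cmax p x (extSc rlo rhi j) - LBall p (extSc rlo rhi j)
  refine Real.sSup_le ?_ ?_
  · rintro _ ⟨r, hr, rfl⟩
    obtain ⟨j, hj⟩ := exists_regret_le_extSc hp hlo hr x
    have := LBall_le_Cstar (r := extSc rlo rhi j) hp
    exact le_ciSup_of_le hbdd j (by linarith)
  · exact le_ciSup_of_le hbdd 0 (sub_nonneg.2 (LBall_le_Cmax hp x))

/-- the relaxed worst-case regret
`Z̃(x) = max_j ( C_max(x, r̄^j) − LB(r̄^j) )` dominates the worst-case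
regret `Z(x)`, where `LB = max {LB₁, LB₂, LB₃}`. -/
theorem relaxed_regret_dominates {m n : ℕ} (hm : 0 < m) (hn : 1 ≤ n)
    (p : Fin m → Fin n → ℝ) (hp : ∀ i j, 0 < p i j)
    (rlo rhi : Fin n → ℝ) (hlo : ∀ j, 0 ≤ rlo j) (hlt : ∀ j, rlo j < rhi j)
    (x : Schedule m n) :
    Zreg p x rlo rhi ≤
      ⨆ j : Fin n, (Cmax p x (extSc rlo rhi j) - LBall p (extSc rlo rhi j)) :=
  relaxed_regret_dominates_general hm hn p hp rlo rhi hlo x
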